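/- arXiv:2002.06557 — 5 statements merged into one kernel-verified Lean document; each statement's English description precedes it below -/
import Mathlib

section
/- For any U ∈ ℝ^{d×r} and x ∈ ℝ^d, ‖x - UU^T x‖² - ‖x‖² ≥ -x^T P x, where P = Π_r[UU^T] is the orthogonal projection onto the span of the top r eigenvectors of UU^T. Equality holds when U has orthonormal columns. -/
open Matrix BigOperators

/-- For U ∈ ℝ^{d×r} and x ∈ ℝ^d, with a truncated eigendecomposition
UUᵀ = O D Oᵀ (O with orthonormal columns, D diagonal with nonnegative entries),
and P = Π_r[UUᵀ] = O E Oᵀ, where E is the diagonal matrix replacing each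
nonzero eigenvalue of D by 1, we have ‖x - UUᵀ x‖² - ‖x‖² ≥ -xᵀ P x,
with equality whenever U has orthonormal columns. -/
theorem stmt2 (d r : ℕ) (U O : Matrix (Fin d) (Fin r) ℝ)
    (D : Matrix (Fin r) (Fin r) ℝ) (P : Matrix (Fin d) (Fin d) ℝ)
    (hO : Oᵀ * O = 1)
    (hD : ∀ l m : Fin r, l ≠ m → D l m = 0)
    (hDnn : ∀ l : Fin r, 0 ≤ D l l)
    (hdec : U * Uᵀ = O * D * Oᵀ)
    (hP : P = O * Matrix.diagonal (fun l => if D l l = 0 then (0 : ℝ) else 1) * Oᵀ) :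
    (∀ x : Fin d → ℝ,
      (x - (U * Uᵀ) *ᵥ x) ⬝ᵥ (x - (U * Uᵀ) *ᵥ x) - x ⬝ᵥ x ≥ -(x ⬝ᵥ P *ᵥ x)) ∧
    (Uᵀ * U = 1 → ∀ x : Fin d → ℝ,
      (x - (U * Uᵀ) *ᵥ x) ⬝ᵥ (x - (U * Uᵀ) *ᵥ x) - x ⬝ᵥ x = -(x ⬝ᵥ P *ᵥ x)) := by
  have hDdiag : D = Matrix.diagonal (fun l => D l l) := by
    ext i j
    by_cases h : i = j
    · subst h; simp
    · rw [Matrix.diagonal_apply_ne _ h]; exact hD i j h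
  have hOO : ∀ X : Matrix (Fin r) (Fin r) ℝ, Oᵀ * (O * X) = X := fun X => by
    rw [← Matrix.mul_assoc, hO, Matrix.one_mul]
  have hOOd : ∀ X : Matrix (Fin r) (Fin d) ℝ, Oᵀ * (O * X) = X := fun X => by
    rw [← Matrix.mul_assoc, hO, Matrix.one_mul]
  have key : ∀ (f : Fin r → ℝ) (x : Fin d → ℝ),
      x ⬝ᵥ (O * Matrix.diagonal f * Oᵀ) *ᵥ x = ∑ l, f l * (Oᵀ *ᵥ x) l ^ 2 := by
    intro f x
    rw [← Matrix.mulVec_mulVec, ← Matrix.mulVec_mulVec, Matrix.dotProduct_mulVec,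
      ← Matrix.mulVec_transpose]
    simp only [dotProduct, Matrix.mulVec_diagonal]
    exact Finset.sum_congr rfl (fun l _ => by ring)
  have hAA : (U * Uᵀ) * (U * Uᵀ) = O * Matrix.diagonal (fun l => D l l * D l l) * Oᵀ := by
    rw [hdec, ← Matrix.diagonal_mul_diagonal, ← hDdiag]
    simp only [Matrix.mul_assoc, hOOd]
  have hAsym : (U * Uᵀ)ᵀ = U * Uᵀ := by
    rw [Matrix.transpose_mul, Matrix.transpose_transpose]
  have expand : ∀ x : Fin d → ℝ,
      (x - (U * Uᵀ) *ᵥ x) ⬝ᵥ (x - (U * Uᵀ) *ᵥ x) - x ⬝ᵥ x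
        = ∑ l, (D l l * D l l - 2 * D l l) * (Oᵀ *ᵥ x) l ^ 2 := by
    intro x
    have h1 : x ⬝ᵥ (U * Uᵀ) *ᵥ x = ∑ l, D l l * (Oᵀ *ᵥ x) l ^ 2 := by
      rw [hdec]; nth_rewrite 1 [hDdiag]; exact key _ x
    have h2 : ((U * Uᵀ) *ᵥ x) ⬝ᵥ ((U * Uᵀ) *ᵥ x) = ∑ l, (D l l * D l l) * (Oᵀ *ᵥ x) l ^ 2 := by
      rw [Matrix.dotProduct_mulVec, ← Matrix.mulVec_transpose, hAsym, Matrix.mulVec_mulVec,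
        dotProduct_comm, hAA]
      exact key _ x
    have h3 : ((U * Uᵀ) *ᵥ x) ⬝ᵥ x = x ⬝ᵥ (U * Uᵀ) *ᵥ x := dotProduct_comm _ _
    rw [sub_dotProduct, dotProduct_sub, dotProduct_sub, h1, h2, h3, h1]
    calc x ⬝ᵥ x - (∑ l, D l l * (Oᵀ *ᵥ x) l ^ 2) -
          ((∑ l, D l l * (Oᵀ *ᵥ x) l ^ 2) - ∑ l, (D l l * D l l) * (Oᵀ *ᵥ x) l ^ 2) - x ⬝ᵥ x
        = (∑ l, (D l l * D l l) * (Oᵀ *ᵥ x) l ^ 2) - 2 * ∑ l, D l l * (Oᵀ *ᵥ x) l ^ 2 := by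
          ring
      _ = ∑ l, (D l l * D l l - 2 * D l l) * (Oᵀ *ᵥ x) l ^ 2 := by
          rw [Finset.mul_sum, ← Finset.sum_sub_distrib]
          exact Finset.sum_congr rfl (fun l _ => by ring)
  have hPform : ∀ x : Fin d → ℝ,
      x ⬝ᵥ P *ᵥ x = ∑ l, (if D l l = 0 then (0:ℝ) else 1) * (Oᵀ *ᵥ x) l ^ 2 := by
    intro x; rw [hP]; exact key _ x
  constructor
  · intro x
    rw [ge_iff_le, expand x, hPform x, ← Finset.sum_neg_distrib]
    apply Finset.sum_le_sum
    intro l _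
    by_cases h : D l l = 0
    · simp [h]
    · rw [if_neg h]
      nlinarith [mul_nonneg (sq_nonneg (D l l - 1)) (sq_nonneg ((Oᵀ *ᵥ x) l))]
  · intro hU x
    have hDD : ∀ l, D l l * D l l = D l l := by
      have hA2 : (U * Uᵀ) * (U * Uᵀ) = U * Uᵀ := by
        rw [Matrix.mul_assoc U, ← Matrix.mul_assoc Uᵀ, hU, Matrix.one_mul]
      rw [hAA, hdec] at hA2
      have hdiag : Matrix.diagonal (fun l => D l l * D l l) = D := by
        have h4 := congrArg (fun X => Oᵀ * X * O) hA2
        simp only [Matrix.mul_assoc, hO, Matrix.mul_one, hOO] at h4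
        exact h4
      intro l
      have := congrFun (congrFun hdiag l) l
      simpa using this
    rw [expand x, hPform x, ← Finset.sum_neg_distrib]
    apply Finset.sum_congr rfl
    intro l _
    by_cases h : D l l = 0
    · simp [h]
    · have h1 : D l l = 1 := by
        have h2 := hDD l
        have h3 : D l l * (D l l - 1) = 0 := by ring_nf; linarith [h2]
        rcases mul_eq_zero.mp h3 with h' | h'
        · exact absurd h' h
        · linarith
      rw [if_neg h, h1]; ring
end

section
/- Let x_1,…,x_n ∈ ℝ^n be nonzero pairwise orthogonal vectors, U ∈ ℝ^{n×r} semi-orthogonal, and H the harmonic mean of ‖x_i‖². If min_i ‖x_i‖² > (r/n)·H, then for every index k maximizing f_i(U) = ‖x_k - UU^T x_k‖² - ‖x_k‖², we have ‖U U^T x_k‖ < ‖x_k‖. -/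
open Matrix BigOperators

private lemma stmt5_trace (n r : ℕ) (x : Fin n → Fin n → ℝ)
    (hx0 : ∀ i, (0:ℝ) < x i ⬝ᵥ x i)
    (horth : ∀ i j, i ≠ j → x i ⬝ᵥ x j = 0)
    (P : Matrix (Fin n) (Fin n) ℝ) (htr : P.trace = r) :
    ∑ i, (x i ⬝ᵥ (P *ᵥ x i)) / (x i ⬝ᵥ x i) = r := by
  set Q : Matrix (Fin n) (Fin n) ℝ := Matrix.of fun i j => x i j / Real.sqrt (x i ⬝ᵥ x i) with hQ
  have key : ∀ i j : Fin n, ∑ l, x i l / Real.sqrt (x i ⬝ᵥ x i) * (x j l / Real.sqrt (x j ⬝ᵥ x j))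
      = (x i ⬝ᵥ x j) / (Real.sqrt (x i ⬝ᵥ x i) * Real.sqrt (x j ⬝ᵥ x j)) := by
    intro i j
    simp only [dotProduct]
    rw [Finset.sum_div]
    exact Finset.sum_congr rfl fun l _ => by ring
  have hQQ : Q * Qᵀ = 1 := by
    ext i j
    simp only [hQ, Matrix.mul_apply, Matrix.transpose_apply, Matrix.of_apply]
    rcases eq_or_ne i j with rfl | hij
    · rw [key, Real.mul_self_sqrt (hx0 i).le, div_self (hx0 i).ne', Matrix.one_apply_eq]
    · rw [key, horth i j hij, zero_div, Matrix.one_apply_ne hij]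
  have hQtQ : Qᵀ * Q = 1 := mul_eq_one_comm.mp hQQ
  have h1 : (Q * P * Qᵀ).trace = P.trace := by
    rw [Matrix.trace_mul_cycle, hQtQ, Matrix.one_mul]
  have hQrow : ∀ i : Fin n, (fun j => Q i j) = (Real.sqrt (x i ⬝ᵥ x i))⁻¹ • x i := by
    intro i; funext j; simp [hQ, div_eq_inv_mul, mul_comm]
  have h2 : (Q * P * Qᵀ).trace = ∑ i, (x i ⬝ᵥ (P *ᵥ x i)) / (x i ⬝ᵥ x i) := by
    rw [Matrix.trace]
    refine Finset.sum_congr rfl fun i _ => ?_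
    have hdiag : (Q * P * Qᵀ).diag i = (fun j => Q i j) ⬝ᵥ (P *ᵥ fun j => Q i j) := by
      simp [Matrix.diag_apply, Matrix.mul_apply, Matrix.mulVec, dotProduct,
        Finset.mul_sum, Finset.sum_mul, mul_assoc]
    rw [hdiag, hQrow, smul_dotProduct, Matrix.mulVec_smul, dotProduct_smul]
    have hs : Real.sqrt (x i ⬝ᵥ x i) * Real.sqrt (x i ⬝ᵥ x i) = x i ⬝ᵥ x i :=
      Real.mul_self_sqrt (hx0 i).le
    rw [smul_eq_mul, smul_eq_mul, ← mul_assoc, ← mul_inv, hs]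
    rw [div_eq_inv_mul, mul_comm]
  rw [← htr, ← h1, h2]

/-- Let x_1,…,x_n ∈ ℝ^n be nonzero pairwise orthogonal vectors,
U ∈ ℝ^{n×r} semi-orthogonal, H the harmonic mean of the ‖x_i‖². If
min_i ‖x_i‖² > (r/n)·H, then for every index k maximizing
f_i(U) = ‖x_i - UUᵀ x_i‖² - ‖x_i‖², we have ‖UUᵀ x_k‖ < ‖x_k‖. -/
theorem stmt5 (n r : ℕ) [NeZero n] (x : Fin n → Fin n → ℝ)
    (hx0 : ∀ i, x i ≠ 0)
    (horth : ∀ i j, i ≠ j → x i ⬝ᵥ x j = 0)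
    (U : Matrix (Fin n) (Fin r) ℝ) (hU : Uᵀ * U = 1) (hrn : r ≤ n)
    (hmin : ∀ i, ((r : ℝ) / n) * ((n : ℝ) / ∑ j, 1 / (x j ⬝ᵥ x j)) < x i ⬝ᵥ x i)
    (k : Fin n)
    (hk : ∀ i, (x i - (U * Uᵀ) *ᵥ x i) ⬝ᵥ (x i - (U * Uᵀ) *ᵥ x i) - x i ⬝ᵥ x i
            ≤ (x k - (U * Uᵀ) *ᵥ x k) ⬝ᵥ (x k - (U * Uᵀ) *ᵥ x k) - x k ⬝ᵥ x k) :
    Real.sqrt (((U * Uᵀ) *ᵥ x k) ⬝ᵥ ((U * Uᵀ) *ᵥ x k)) < Real.sqrt (x k ⬝ᵥ x k) := by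
  set P : Matrix (Fin n) (Fin n) ℝ := U * Uᵀ with hP
  have hPsymm : Pᵀ = P := by simp [hP, Matrix.transpose_mul]
  have hPidem : P * P = P := by
    rw [hP, Matrix.mul_assoc, ← Matrix.mul_assoc Uᵀ U Uᵀ, hU, Matrix.one_mul]
  have hpos : ∀ i, (0:ℝ) < x i ⬝ᵥ x i := by
    intro i
    rcases (Finset.sum_nonneg fun l (_ : l ∈ Finset.univ) => mul_self_nonneg (x i l)).lt_or_eq
      with h | h
    · exact h
    · exact absurd (dotProduct_self_eq_zero.mp h.symm) (hx0 i)
  -- ‖P v‖² = vᵀ P v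
  have hPP : ∀ v : Fin n → ℝ, (P *ᵥ v) ⬝ᵥ (P *ᵥ v) = v ⬝ᵥ (P *ᵥ v) := by
    intro v
    rw [dotProduct_mulVec, ← mulVec_transpose, hPsymm, mulVec_mulVec, hPidem, dotProduct_comm]
  -- the objective f_i equals -(x_i ⬝ P x_i)
  have hf : ∀ v : Fin n → ℝ,
      (v - P *ᵥ v) ⬝ᵥ (v - P *ᵥ v) - v ⬝ᵥ v = -(v ⬝ᵥ (P *ᵥ v)) := by
    intro v
    rw [sub_dotProduct, dotProduct_sub, dotProduct_sub, hPP, dotProduct_comm (P *ᵥ v) v]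
    ring
  have hkc : ∀ i, x k ⬝ᵥ (P *ᵥ x k) ≤ x i ⬝ᵥ (P *ᵥ x i) := by
    intro i
    have := hk i
    rw [hf (x i), hf (x k)] at this
    linarith
  -- trace of P is r
  have htr : P.trace = (r : ℝ) := by
    rw [hP, Matrix.trace_mul_comm, hU, Matrix.trace_one]
    simp
  have hsum : ∑ i, (x i ⬝ᵥ (P *ᵥ x i)) / (x i ⬝ᵥ x i) = (r : ℝ) :=
    stmt5_trace n r x hpos horth P htr
  set S : ℝ := ∑ j, 1 / (x j ⬝ᵥ x j) with hS
  have hSpos : 0 < S := by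
    apply Finset.sum_pos (fun j _ => one_div_pos.mpr (hpos j)) ⟨k, Finset.mem_univ k⟩
  set c : ℝ := x k ⬝ᵥ (P *ᵥ x k) with hc
  have hcS : c * S ≤ (r : ℝ) := by
    rw [← hsum, hS, Finset.mul_sum]
    refine Finset.sum_le_sum fun i _ => ?_
    rw [mul_one_div, div_le_div_iff₀ (hpos i) (hpos i)]
    have := hkc i
    nlinarith [hpos i]
  have hnn : (0:ℝ) < n := by
    exact_mod_cast Nat.pos_of_ne_zero (NeZero.ne n)
  have hrS : (r : ℝ) / n * ((n : ℝ) / S) = (r : ℝ) / S := by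
    field_simp
  have hck : c < x k ⬝ᵥ x k := by
    have h1 : c ≤ (r : ℝ) / S := (le_div_iff₀ hSpos).mpr hcS
    have h2 := hmin k
    rw [hrS] at h2
    linarith
  have hcnn : 0 ≤ (P *ᵥ x k) ⬝ᵥ (P *ᵥ x k) :=
    Finset.sum_nonneg fun l _ => mul_self_nonneg _
  rw [hPP (x k)] at hcnn ⊢
  exact Real.sqrt_lt_sqrt hcnn hck
end

section
/- Consider the semidefinite program: maximize min_i ‖x_i‖² P̂_{ii} over symmetric n×n matrices P̂ with 0 ⪯ P̂ ⪯ I and Tr(P̂) ≤ r, where x_1,…,x_n are nonzero vectors. The diagonal matrix with P̂_{ii} = (r/n)·H/‖x_i‖² (H the harmonic mean of ‖x_i‖²) is feasible (assuming (r/n)H ≤ ‖x_i‖² for all i) and optimal, with optimal value (r/n)·H. -/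
open Matrix BigOperators

/-- In the SDP max min_i ‖x_i‖² P̂_{ii} over symmetric P̂ with
0 ⪯ P̂ ⪯ I and Tr(P̂) ≤ r, the diagonal matrix Q with Q_{ii} = (r/n)·H/‖x_i‖²
(H the harmonic mean of the ‖x_i‖²) is feasible and optimal, with value (r/n)·H. -/
theorem stmt6 (n r : ℕ) [NeZero n] (hr : 0 < r) (hrn : r ≤ n)
    (x : Fin n → Fin n → ℝ) (hx0 : ∀ i, x i ≠ 0)
    (H : ℝ) (hH : H = (n : ℝ) / ∑ i, 1 / (x i ⬝ᵥ x i))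
    (hmin : ∀ i, ((r : ℝ) / n) * H < x i ⬝ᵥ x i)
    (Q : Matrix (Fin n) (Fin n) ℝ)
    (hQ : Q = Matrix.diagonal fun i => ((r : ℝ) / n) * H / (x i ⬝ᵥ x i)) :
    Q.PosSemidef ∧ ((1 : Matrix (Fin n) (Fin n) ℝ) - Q).PosSemidef ∧
    Q.trace ≤ (r : ℝ) ∧
    (∀ i, (x i ⬝ᵥ x i) * Q i i = ((r : ℝ) / n) * H) ∧
    (∀ P : Matrix (Fin n) (Fin n) ℝ, P.PosSemidef →
      ((1 : Matrix (Fin n) (Fin n) ℝ) - P).PosSemidef → P.trace ≤ (r : ℝ) →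
      ∃ i, (x i ⬝ᵥ x i) * P i i ≤ ((r : ℝ) / n) * H) := by
  have hxi : ∀ i, 0 < x i ⬝ᵥ x i := by
    intro i
    have hne : x i ⬝ᵥ x i ≠ 0 := fun h => hx0 i ((dotProduct_self_eq_zero).mp h)
    have hnonneg : 0 ≤ x i ⬝ᵥ x i :=
      Finset.sum_nonneg fun j _ => mul_self_nonneg _
    exact lt_of_le_of_ne hnonneg (Ne.symm hne)
  have hn : (0 : ℝ) < n := Nat.cast_pos.mpr (Nat.pos_of_ne_zero (NeZero.ne n))
  set S : ℝ := ∑ i, 1 / (x i ⬝ᵥ x i) with hS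
  have hSpos : 0 < S := Finset.sum_pos (fun i _ => one_div_pos.mpr (hxi i)) Finset.univ_nonempty
  have hHpos : 0 < H := by rw [hH]; exact div_pos hn hSpos
  have hHS : H * S = n := by
    rw [hH]; field_simp
  have hq0 : ∀ i, 0 ≤ ((r : ℝ) / n) * H / (x i ⬝ᵥ x i) := by
    intro i; have := hxi i; positivity
  have htr : Q.trace = (r : ℝ) := by
    rw [hQ, Matrix.trace_diagonal]
    have : ∀ i ∈ Finset.univ, ((r : ℝ) / n) * H / (x i ⬝ᵥ x i)
        = ((r : ℝ) / n) * H * (1 / (x i ⬝ᵥ x i)) := by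
      intro i _; ring
    rw [Finset.sum_congr rfl this, ← Finset.mul_sum, ← hS, mul_assoc, hHS]
    field_simp
  refine ⟨?_, ?_, ?_, ?_, ?_⟩
  · rw [hQ]
    exact Matrix.posSemidef_diagonal_iff.mpr hq0
  · have h1 : (1 : Matrix (Fin n) (Fin n) ℝ) - Q
        = Matrix.diagonal (fun i => 1 - ((r : ℝ) / n) * H / (x i ⬝ᵥ x i)) := by
      rw [hQ, ← Matrix.diagonal_one, Matrix.diagonal_sub]
    rw [h1]
    refine Matrix.posSemidef_diagonal_iff.mpr fun i => ?_
    have h2 : ((r : ℝ) / n) * H / (x i ⬝ᵥ x i) < 1 :=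
      (div_lt_one (hxi i)).mpr (hmin i)
    linarith
  · rw [htr]
  · intro i
    rw [hQ]
    simp only [Matrix.diagonal_apply_eq]
    exact mul_div_cancel₀ _ (hxi i).ne'
  · intro P hP hIP htrP
    by_contra hcon
    push_neg at hcon
    have hPi : ∀ i, ((r : ℝ) / n) * H / (x i ⬝ᵥ x i) < P i i := by
      intro i
      exact (div_lt_iff₀' (hxi i)).mpr (hcon i)
    have : (r : ℝ) < P.trace := by
      rw [← htr, hQ, Matrix.trace_diagonal, Matrix.trace]
      exact Finset.sum_lt_sum_of_nonempty Finset.univ_nonempty fun i _ => hPi i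
    linarith
end

section
/- Let x_1,…,x_n ∈ ℝ^n be nonzero pairwise orthogonal vectors with min_i ‖x_i‖² > (r/n)·H, H the harmonic mean of the squared norms. Then for any rank-≤r orthogonal projection P on ℝ^n, min_i x_i^T P x_i ≤ (r/n)·H, and this bound is attained by some semi-orthogonal U with P = UU^T whose rows in the normalized target basis have squared norms (r/n)·H/‖x_i‖². -/
/-!
Since `P` is idempotent, `rank P = trace P`, and computing the trace in the orthonormal basis
`xᵢ / ‖xᵢ‖` gives `trace P = ∑ᵢ xᵢᵀ P xᵢ / ‖xᵢ‖²`. As `∑ᵢ ((r/n) H) / ‖xᵢ‖² = r`, the values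
`xᵢᵀ P xᵢ` cannot all exceed `(r/n) H`.

For attainment, `dᵢ = (r/n) H / ‖xᵢ‖²` lies in `[0, 1]` and sums to `r`, hence (Schur–Horn for
projections) is the diagonal of `W Wᵀ` for some `W` with `Wᵀ W = 1`, and `U` is `W` written in the
basis `xᵢ / ‖xᵢ‖`. The Schur–Horn step is proved by induction on the number of entries of
`d` outside `{0, 1}`: two such entries `a, b` are replaced by `(a + b, 0)` or by `(1, a + b - 1)`,
and a rotation of the two corresponding rows recovers `a, b`; those rows are orthogonal because one
of them has norm `0` or `1`, and in `W Wᵀ`, a projection, `(W Wᵀ)ᵢⱼ² ≤ (W Wᵀ)ᵢᵢ (1 - (W Wᵀ)ᵢᵢ)`.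
-/

open Matrix Finset

section ProjectionDiagonal

variable {ι κ : Type*} [Fintype ι] [DecidableEq ι] [Fintype κ]

theorem Matrix.trace_eq_rank_of_isIdempotentElem {K : Type*} [Field K] {P : Matrix ι ι K}
    (hP : IsIdempotentElem P) : P.trace = P.rank := by
  rw [← trace_toLin'_eq]
  exact (LinearMap.IsIdempotentElem.isProj_range _ (hP.map toLinAlgEquiv')).trace

theorem Matrix.trace_eq_sum_dotProduct_mulVec {R : Type*} [CommRing R] {V : Matrix ι ι R}
    (hV : V * Vᵀ = 1) (P : Matrix ι ι R) : P.trace = ∑ i, V i ⬝ᵥ P *ᵥ V i :=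
  calc P.trace = (Vᵀ * V * P).trace := by rw [mul_eq_one_comm.mp hV, Matrix.one_mul]
    _ = (V * P * Vᵀ).trace := by rw [Matrix.mul_assoc, trace_mul_comm, Matrix.mul_assoc]
    _ = ∑ i, V i ⬝ᵥ P *ᵥ V i := by
      simp only [trace, diag, mul_apply, transpose_apply, dotProduct, mulVec, sum_mul, mul_sum]
      exact sum_congr rfl fun i _ => sum_comm.trans (sum_congr rfl fun _ _ =>
        sum_congr rfl fun _ _ => by ring)

theorem Matrix.dotProduct_mul_transpose_mulVec {ρ : Type*} [Fintype ρ] (U : Matrix κ ρ ℝ)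
    (v : κ → ℝ) : v ⬝ᵥ (U * Uᵀ) *ᵥ v = ∑ l, (v ⬝ᵥ fun a => U a l) ^ 2 := by
  rw [← mulVec_mulVec, dotProduct_mulVec, mulVec_transpose, dotProduct]
  simp only [sq]
  rfl

theorem dotProduct_self_pos {v : κ → ℝ} (hv : v ≠ 0) : 0 < v ⬝ᵥ v := by
  simpa using dotProduct_star_self_pos_iff.2 hv

theorem sum_eq_card_filter_eq_one {α : Type*} {s : Finset α} {d : α → ℝ}
    (hd : ∀ i ∈ s, d i = 0 ∨ d i = 1) : ∑ i ∈ s, d i = #{i ∈ s | d i = 1} := by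
  rw [← sum_boole]
  refine sum_congr rfl fun i hi => ?_
  rcases hd i hi with h | h <;> simp [h]

theorem sum_eq_sum_of_eq_off_pair {M : Type*} [AddCommMonoid M] {f g : ι → M} {i j : ι}
    (hij : i ≠ j) (hoff : ∀ k, k ≠ i → k ≠ j → f k = g k) (hpair : f i + f j = g i + g j) :
    ∑ k, f k = ∑ k, g k := by
  have split : ∀ h : ι → M, ∑ k, h k = h i + h j + ∑ k ∈ (univ.erase i).erase j, h k := by
    intro h
    rw [add_assoc, add_sum_erase _ _ (mem_erase.2 ⟨hij.symm, mem_univ j⟩),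
      add_sum_erase _ _ (mem_univ i)]
  rw [split f, split g, hpair]
  refine congrArg _ (sum_congr rfl fun k hk => ?_)
  simp only [mem_erase, mem_univ, and_true] at hk
  exact hoff k hk.2 hk.1

theorem exists_rotate_rows (W : Matrix ι κ ℝ) {i j : ι} (hij : i ≠ j) (horth : W i ⬝ᵥ W j = 0)
    {a : ℝ} (hja : W j ⬝ᵥ W j ≤ a) (hai : a ≤ W i ⬝ᵥ W i) (hji : W j ⬝ᵥ W j < W i ⬝ᵥ W i) :
    ∃ W' : Matrix ι κ ℝ, W'ᵀ * W' = Wᵀ * W ∧ W' i ⬝ᵥ W' i = a ∧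
      W' j ⬝ᵥ W' j = W i ⬝ᵥ W i + W j ⬝ᵥ W j - a ∧ ∀ k, k ≠ i → k ≠ j → W' k = W k := by
  set p := W i ⬝ᵥ W i
  set q := W j ⬝ᵥ W j
  set c := √((a - q) / (p - q))
  set s := √((p - a) / (p - q))
  have hpq : p - q ≠ 0 := by linarith
  have hc : c ^ 2 = (a - q) / (p - q) := Real.sq_sqrt (div_nonneg (by linarith) (by linarith))
  have hs : s ^ 2 = (p - a) / (p - q) := Real.sq_sqrt (div_nonneg (by linarith) (by linarith))
  have hcs : c ^ 2 + s ^ 2 = 1 := by rw [hc, hs]; field_simp; ring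
  have hrow : ∀ α β : ℝ, (α • W i + β • W j) ⬝ᵥ (α • W i + β • W j) = α ^ 2 * p + β ^ 2 * q := by
    intro α β
    simp only [dotProduct_add, add_dotProduct, dotProduct_smul, smul_dotProduct, smul_eq_mul,
      dotProduct_comm (W j) (W i), horth, p, q]
    ring
  refine ⟨(W.updateRow i (c • W i + s • W j)).updateRow j (-s • W i + c • W j), ?_, ?_, ?_, ?_⟩
  · ext l l'
    simp only [mul_apply, transpose_apply]
    refine sum_eq_sum_of_eq_off_pair hij (fun k hki hkj => by simp [updateRow_ne, hki, hkj]) ?_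
    simp [updateRow_ne hij]
    linear_combination (W i l * W i l' + W j l * W j l') * hcs
  · rw [updateRow_ne hij, updateRow_self, hrow, hc, hs]
    field_simp
    ring
  · rw [updateRow_self, hrow, neg_sq, hc, hs]
    field_simp
    ring
  · intro k hki hkj
    rw [updateRow_ne hkj, updateRow_ne hki]

variable [DecidableEq κ]

/-- `d` is the diagonal of the orthogonal projection `W * Wᵀ` of rank `card κ`. -/
def IsProjectionDiagonal (κ : Type*) [Fintype κ] [DecidableEq κ] (d : ι → ℝ) : Prop :=
  ∃ W : Matrix ι κ ℝ, Wᵀ * W = 1 ∧ ∀ i, W i ⬝ᵥ W i = d i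

theorem isProjectionDiagonal_of_eq_zero_or_eq_one {r : ℕ} {d : ι → ℝ}
    (hd : ∀ i, d i = 0 ∨ d i = 1) (hsum : ∑ i, d i = r) : IsProjectionDiagonal (Fin r) d := by
  set S : Finset ι := {i | d i = 1}
  have hS : #S = r := by
    exact_mod_cast (sum_eq_card_filter_eq_one fun i _ => hd i).symm.trans hsum
  let e : Fin r ≃ S := (S.equivFin.trans (finCongr hS)).symm
  refine ⟨(1 : Matrix ι ι ℝ).submatrix id (fun l => (e l : ι)), ?_, fun i => ?_⟩
  · rw [transpose_submatrix, transpose_one, ← submatrix_mul _ _ _ _ _ Function.bijective_id,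
      Matrix.one_mul]
    exact submatrix_one _ (Subtype.val_injective.comp e.injective)
  · simp only [dotProduct, submatrix_apply, id_eq, one_apply, ite_zero_mul_ite_zero, and_self,
      mul_one]
    rw [e.sum_comp (fun s : S => if i = s then (1 : ℝ) else 0),
      sum_coe_sort S (fun s => if i = s then (1 : ℝ) else 0), sum_ite_eq]
    rcases hd i with h | h <;> simp [S, h]

theorem sq_dotProduct_le_of_transpose_mul_self_eq_one {W : Matrix ι κ ℝ} (hW : Wᵀ * W = 1)
    {i j : ι} (hij : i ≠ j) : (W i ⬝ᵥ W j) ^ 2 ≤ (W i ⬝ᵥ W i) * (1 - W i ⬝ᵥ W i) := by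
  set P := W * Wᵀ
  have hP : ∀ k l, P k l = W k ⬝ᵥ W l := fun _ _ => rfl
  have hPP : P * P = P := by
    simp only [P, Matrix.mul_assoc, ← Matrix.mul_assoc Wᵀ, hW, Matrix.one_mul]
  have : P i i ^ 2 + P i j ^ 2 ≤ P i i :=
    calc P i i ^ 2 + P i j ^ 2 = ∑ k ∈ {i, j}, P i k ^ 2 := (sum_pair (f := (P i · ^ 2)) hij).symm
      _ ≤ ∑ k, P i k ^ 2 := sum_le_sum_of_subset_of_nonneg (subset_univ _) fun _ _ _ => sq_nonneg _
      _ = (P * P) i i := by simp only [mul_apply, sq, hP, dotProduct_comm]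
      _ = P i i := by rw [hPP]
  rw [hP, hP] at this
  linarith

theorem IsProjectionDiagonal.of_update_pair {d : ι → ℝ} {i j : ι} (hij : i ≠ j) {p q : ℝ}
    (hq : q ≤ d i) (hp : d i ≤ p) (hqp : q < p) (hpq : p + q = d i + d j) (hext : q = 0 ∨ p = 1)
    (h : IsProjectionDiagonal κ (Function.update (Function.update d i p) j q)) :
    IsProjectionDiagonal κ d := by
  obtain ⟨W, hW, hWd⟩ := h
  have hWi : W i ⬝ᵥ W i = p := by simpa [Function.update_of_ne hij] using hWd i
  have hWj : W j ⬝ᵥ W j = q := by simpa using hWd j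
  have horth : W i ⬝ᵥ W j = 0 := by
    rcases hext with rfl | rfl
    · have := sq_dotProduct_le_of_transpose_mul_self_eq_one hW hij.symm
      rw [hWj, zero_mul, dotProduct_comm] at this
      exact sq_eq_zero_iff.1 (le_antisymm this (sq_nonneg _))
    · have := sq_dotProduct_le_of_transpose_mul_self_eq_one hW hij
      rw [hWi, sub_self, mul_zero] at this
      exact sq_eq_zero_iff.1 (le_antisymm this (sq_nonneg _))
  obtain ⟨W', hW', hW'i, hW'j, hW'k⟩ := exists_rotate_rows W hij horth (a := d i)
    (hWj ▸ hq) (hWi ▸ hp) (hWi ▸ hWj ▸ hqp)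
  refine ⟨W', hW'.trans hW, fun k => ?_⟩
  by_cases hki : k = i
  · rw [hki, hW'i]
  by_cases hkj : k = j
  · rw [hkj, hW'j, hWi, hWj]
    linarith
  rw [hW'k k hki hkj, hWd k, Function.update_of_ne hkj, Function.update_of_ne hki]

noncomputable def fractionalSupport (d : ι → ℝ) : Finset ι := {k | d k ≠ 0 ∧ d k ≠ 1}

theorem card_fractionalSupport_update_pair_lt {d : ι → ℝ} {i j : ι} (hij : i ≠ j)
    (hi : i ∈ fractionalSupport d) (hj : j ∈ fractionalSupport d) {p q : ℝ}
    (hext : q = 0 ∨ p = 1) :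
    #(fractionalSupport (Function.update (Function.update d i p) j q)) <
      #(fractionalSupport d) := by
  refine card_lt_card ((ssubset_iff_of_subset fun k hk => ?_).2 ?_)
  · by_cases hki : k = i
    · exact hki ▸ hi
    by_cases hkj : k = j
    · exact hkj ▸ hj
    simpa [fractionalSupport, Function.update_of_ne hki, Function.update_of_ne hkj] using hk
  · rcases hext with rfl | rfl
    · exact ⟨j, hj, by simp [fractionalSupport]⟩
    · exact ⟨i, hi, by simp [fractionalSupport, Function.update_of_ne hij]⟩

theorem exists_ne_mem_fractionalSupport {r : ℕ} {d : ι → ℝ} (hd : ∀ k, d k ∈ Set.Icc 0 1)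
    (hsum : ∑ k, d k = r) {i : ι} (hi : i ∈ fractionalSupport d) :
    ∃ j ∈ fractionalSupport d, j ≠ i := by
  by_contra! h
  have hbin : ∀ k ∈ univ.erase i, d k = 0 ∨ d k = 1 := fun k hk => by
    have := mt (h k) (ne_of_mem_erase hk)
    simp only [fractionalSupport, mem_filter, mem_univ, true_and] at this
    tauto
  simp only [fractionalSupport, mem_filter, mem_univ, true_and] at hi
  rw [← add_sum_erase _ _ (mem_univ i), sum_eq_card_filter_eq_one hbin] at hsum
  have h0 : 0 < d i := lt_of_le_of_ne (hd i).1 (Ne.symm hi.1)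
  have h1 : d i < 1 := lt_of_le_of_ne (hd i).2 hi.2
  have hm : (#{k ∈ univ.erase i | d k = 1} : ℝ) < r ∧
      (r : ℝ) < #{k ∈ univ.erase i | d k = 1} + 1 := ⟨by linarith, by linarith⟩
  norm_cast at hm
  omega

theorem isProjectionDiagonal_of_sum_eq {r : ℕ} (d : ι → ℝ) (hd : ∀ i, d i ∈ Set.Icc 0 1)
    (hsum : ∑ i, d i = r) : IsProjectionDiagonal (Fin r) d := by
  induction hN : #(fractionalSupport d) using Nat.strong_induction_on generalizing d with
  | _ N ih =>
  obtain hempty | ⟨i, hi⟩ := (fractionalSupport d).eq_empty_or_nonempty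
  · refine isProjectionDiagonal_of_eq_zero_or_eq_one (fun k => ?_) hsum
    have := filter_eq_empty_iff.1 hempty (mem_univ k)
    tauto
  obtain ⟨j, hj, hji⟩ := exists_ne_mem_fractionalSupport hd hsum hi
  have hi' : d i ≠ 0 ∧ d i ≠ 1 := by simpa [fractionalSupport] using hi
  obtain ⟨p, q, hq0, hp1, hq, hp, hpq, hext⟩ : ∃ p q : ℝ, 0 ≤ q ∧ p ≤ 1 ∧ q ≤ d i ∧ d i ≤ p ∧
      p + q = d i + d j ∧ (q = 0 ∨ p = 1) := by
    rcases le_or_gt (d i + d j) 1 with h | h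
    · exact ⟨d i + d j, 0, le_rfl, h, (hd i).1, by linarith [(hd j).1], by ring, .inl rfl⟩
    · exact ⟨1, d i + d j - 1, by linarith, le_rfl, by linarith [(hd j).2], (hd i).2, by ring,
        .inr rfl⟩
  have hqp : q < p := by
    rcases hext with rfl | rfl
    · exact (lt_of_le_of_ne (hd i).1 (Ne.symm hi'.1)).trans_le hp
    · exact hq.trans_lt (lt_of_le_of_ne (hd i).2 hi'.2)
  refine IsProjectionDiagonal.of_update_pair hji.symm hq hp hqp hpq hext
    (ih _ (hN ▸ card_fractionalSupport_update_pair_lt hji.symm hi hj hext) _ (fun k => ?_) ?_ rfl)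
  · simp only [Function.update_apply, Set.mem_Icc]
    split_ifs
    · exact ⟨hq0, by linarith⟩
    · exact ⟨by linarith, hp1⟩
    · exact hd k
  · rw [← hsum]
    refine sum_eq_sum_of_eq_off_pair hji.symm (fun k hki hkj => ?_) ?_
    · rw [Function.update_of_ne hkj, Function.update_of_ne hki]
    · rw [Function.update_self, Function.update_of_ne hji.symm, Function.update_self, hpq]

end ProjectionDiagonal

section NormalizedRows

variable {ι κ : Type*} [Fintype κ]

noncomputable def normalizedRows (x : ι → κ → ℝ) : Matrix ι κ ℝ :=
  of fun i => (√(x i ⬝ᵥ x i))⁻¹ • x i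

theorem normalizedRows_apply (x : ι → κ → ℝ) (i : ι) :
    normalizedRows x i = (√(x i ⬝ᵥ x i))⁻¹ • x i :=
  rfl

theorem normalizedRows_mul_transpose [DecidableEq ι] {x : ι → κ → ℝ} (hx0 : ∀ i, x i ≠ 0)
    (horth : ∀ i j, i ≠ j → x i ⬝ᵥ x j = 0) : normalizedRows x * (normalizedRows x)ᵀ = 1 := by
  ext i j
  change normalizedRows x i ⬝ᵥ normalizedRows x j = _
  simp only [normalizedRows_apply, smul_dotProduct, dotProduct_smul, smul_eq_mul]
  rcases eq_or_ne i j with rfl | hij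
  · have hpos := dotProduct_self_pos (hx0 i)
    rw [one_apply_eq, ← mul_assoc, ← mul_inv, Real.mul_self_sqrt hpos.le, inv_mul_cancel₀ hpos.ne']
  · rw [horth i j hij, one_apply_ne hij, mul_zero, mul_zero]

theorem normalizedRows_dotProduct_mulVec (x : ι → κ → ℝ) (A : Matrix κ κ ℝ) (i : ι) :
    normalizedRows x i ⬝ᵥ A *ᵥ normalizedRows x i = (x i ⬝ᵥ A *ᵥ x i) / (x i ⬝ᵥ x i) := by
  have hnonneg : 0 ≤ x i ⬝ᵥ x i := sum_nonneg fun _ _ => mul_self_nonneg _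
  simp only [normalizedRows_apply, mulVec_smul, smul_dotProduct, dotProduct_smul, smul_eq_mul]
  rw [← mul_assoc, ← mul_inv, Real.mul_self_sqrt hnonneg, inv_mul_eq_div]

theorem exists_dotProduct_mulVec_le_of_isIdempotentElem [Fintype ι] [DecidableEq ι] [Nonempty ι]
    {x : ι → ι → ℝ} (hx0 : ∀ i, x i ≠ 0) (horth : ∀ i j, i ≠ j → x i ⬝ᵥ x j = 0) {P : Matrix ι ι ℝ}
    (hP : IsIdempotentElem P) {c : ℝ} (hc : (P.rank : ℝ) ≤ ∑ i, c / (x i ⬝ᵥ x i)) :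
    ∃ i, x i ⬝ᵥ P *ᵥ x i ≤ c := by
  by_contra! h
  have htrace : P.trace = ∑ i, (x i ⬝ᵥ P *ᵥ x i) / (x i ⬝ᵥ x i) := by
    simp only [trace_eq_sum_dotProduct_mulVec (normalizedRows_mul_transpose hx0 horth),
      normalizedRows_dotProduct_mulVec]
  have hlt : ∑ i, c / (x i ⬝ᵥ x i) < ∑ i, (x i ⬝ᵥ P *ᵥ x i) / (x i ⬝ᵥ x i) :=
    sum_lt_sum_of_nonempty univ_nonempty fun i _ =>
      div_lt_div_of_pos_right (h i) (dotProduct_self_pos (hx0 i))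
  linarith [trace_eq_rank_of_isIdempotentElem hP]

theorem exists_transpose_mul_self_eq_one_of_sum_eq [Fintype ι] [DecidableEq ι] [DecidableEq κ]
    {x : ι → κ → ℝ} (hx0 : ∀ i, x i ≠ 0) (horth : ∀ i j, i ≠ j → x i ⬝ᵥ x j = 0) {r : ℕ}
    {d : ι → ℝ} (hd : ∀ i, d i ∈ Set.Icc 0 1) (hsum : ∑ i, d i = r) :
    ∃ U : Matrix κ (Fin r) ℝ, Uᵀ * U = 1 ∧
      ∀ i, ∑ l, (normalizedRows x i ⬝ᵥ fun a => U a l) ^ 2 = d i := by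
  obtain ⟨W, hW, hWd⟩ := isProjectionDiagonal_of_sum_eq d hd hsum
  set V := normalizedRows x
  have hV : V * Vᵀ = 1 := normalizedRows_mul_transpose hx0 horth
  have hVU : V * (Vᵀ * W) = W := by rw [← Matrix.mul_assoc, hV, Matrix.one_mul]
  refine ⟨Vᵀ * W, ?_, fun i => ?_⟩
  · rw [transpose_mul, transpose_transpose, Matrix.mul_assoc, hVU, hW]
  · have hcol : ∀ l, (V i ⬝ᵥ fun a => (Vᵀ * W) a l) = W i l := fun l =>
      congrFun (congrFun hVU i) l
    simp only [hcol, sq, ← hWd i]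
    rfl

end NormalizedRows

theorem stmt17_general (n r : ℕ) [NeZero n] (x : Fin n → Fin n → ℝ)
    (hx0 : ∀ i, x i ≠ 0)
    (horth : ∀ i j, i ≠ j → x i ⬝ᵥ x j = 0)
    (H : ℝ) (hH : H = (n : ℝ) / ∑ i, 1 / (x i ⬝ᵥ x i))
    (hmin : ∀ i, ((r : ℝ) / n) * H < x i ⬝ᵥ x i) :
    (∀ P : Matrix (Fin n) (Fin n) ℝ, Pᵀ = P → P * P = P → P.rank ≤ r →
      ∃ i, x i ⬝ᵥ P *ᵥ x i ≤ ((r : ℝ) / n) * H) ∧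
    (∃ U : Matrix (Fin n) (Fin r) ℝ, Uᵀ * U = 1 ∧
      (∀ i, x i ⬝ᵥ (U * Uᵀ) *ᵥ x i = ((r : ℝ) / n) * H) ∧
      (∀ i, ∑ l : Fin r,
          (((Real.sqrt (x i ⬝ᵥ x i))⁻¹ • x i) ⬝ᵥ (fun a => U a l)) ^ 2
        = ((r : ℝ) / n) * H / (x i ⬝ᵥ x i))) := by
  have hpos : ∀ i, 0 < x i ⬝ᵥ x i := fun i => dotProduct_self_pos (hx0 i)
  have hS : 0 < ∑ i, 1 / (x i ⬝ᵥ x i) := sum_pos (fun i _ => one_div_pos.2 (hpos i)) univ_nonempty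
  have hc : (r : ℝ) / n * H = r / ∑ i, 1 / (x i ⬝ᵥ x i) := by
    have hn : (n : ℝ) ≠ 0 := Nat.cast_ne_zero.2 (NeZero.ne n)
    rw [hH]
    field_simp
  have hsum : ∑ i, (r : ℝ) / n * H / (x i ⬝ᵥ x i) = r := by
    simp_rw [hc, div_eq_mul_one_div ((r : ℝ) / _) (x _ ⬝ᵥ x _), ← mul_sum]
    exact div_mul_cancel₀ _ hS.ne'
  refine ⟨fun P _ hP hrank => exists_dotProduct_mulVec_le_of_isIdempotentElem hx0 horth hP
    (by rw [hsum]; exact_mod_cast hrank), ?_⟩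
  have hc0 : 0 ≤ (r : ℝ) / n * H := hc ▸ div_nonneg (Nat.cast_nonneg r) hS.le
  obtain ⟨U, hU, hUd⟩ := exists_transpose_mul_self_eq_one_of_sum_eq hx0 horth
    (fun i => ⟨div_nonneg hc0 (hpos i).le, (div_le_one (hpos i)).2 (hmin i).le⟩) hsum
  refine ⟨U, hU, fun i => ?_, hUd⟩
  calc x i ⬝ᵥ (U * Uᵀ) *ᵥ x i
      = (x i ⬝ᵥ x i) * (normalizedRows x i ⬝ᵥ (U * Uᵀ) *ᵥ normalizedRows x i) := by
        rw [normalizedRows_dotProduct_mulVec, mul_div_cancel₀ _ (hpos i).ne']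
    _ = (x i ⬝ᵥ x i) * ((r : ℝ) / n * H / (x i ⬝ᵥ x i)) := by
        rw [dotProduct_mul_transpose_mulVec, hUd]
    _ = (r : ℝ) / n * H := mul_div_cancel₀ _ (hpos i).ne'

/-- Let x_1,…,x_n ∈ ℝ^n be nonzero pairwise orthogonal vectors with
min_i ‖x_i‖² > (r/n)·H, H the harmonic mean of the squared norms. Then for any
rank-≤r orthogonal projection P on ℝ^n, min_i x_iᵀPx_i ≤ (r/n)·H; and the bound is
attained by some semi-orthogonal U with P = UUᵀ whose rows in the normalized target
basis have squared norms (r/n)·H/‖x_i‖². -/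
theorem stmt17 (n r : ℕ) [NeZero n] (hrn : r ≤ n) (x : Fin n → Fin n → ℝ)
    (hx0 : ∀ i, x i ≠ 0)
    (horth : ∀ i j, i ≠ j → x i ⬝ᵥ x j = 0)
    (H : ℝ) (hH : H = (n : ℝ) / ∑ i, 1 / (x i ⬝ᵥ x i))
    (hmin : ∀ i, ((r : ℝ) / n) * H < x i ⬝ᵥ x i) :
    (∀ P : Matrix (Fin n) (Fin n) ℝ, Pᵀ = P → P * P = P → P.rank ≤ r →
      ∃ i, x i ⬝ᵥ P *ᵥ x i ≤ ((r : ℝ) / n) * H) ∧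
    (∃ U : Matrix (Fin n) (Fin r) ℝ, Uᵀ * U = 1 ∧
      (∀ i, x i ⬝ᵥ (U * Uᵀ) *ᵥ x i = ((r : ℝ) / n) * H) ∧
      (∀ i, ∑ l : Fin r,
          (((Real.sqrt (x i ⬝ᵥ x i))⁻¹ • x i) ⬝ᵥ (fun a => U a l)) ^ 2
        = ((r : ℝ) / n) * H / (x i ⬝ᵥ x i))) :=
  stmt17_general n r x hx0 horth H hH hmin
end

section
/- Let x_1,…,x_n ∈ ℝ^n be an orthogonal family of nonzero vectors with H the harmonic mean of squared norms, and assume (r/n)·H < min_i ‖x_i‖². If the value (r/n)·H/‖x_i‖² < 1 strictly for all i and these values are not all in {0,1}, then the optimal SDR solution P̂ (diagonal with entries (r/n)H/‖x_i‖²) has rank n > r, hence is infeasible for the rank-constrained FPCA problem. -/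
open Matrix BigOperators

/-- Let x_1,…,x_n ∈ ℝ^n be nonzero pairwise orthogonal with H the
harmonic mean of squared norms and (r/n)·H < min_i ‖x_i‖² (so in particular
(r/n)·H/‖x_i‖² < 1 for all i, and 0 < r < n). Then the optimal SDR solution
P̂ = diag((r/n)H/‖x_i‖²) has rank n > r, hence is infeasible for the
rank-constrained FPCA problem (it is not an orthogonal projection of rank ≤ r). -/
theorem stmt19 (n r : ℕ) [NeZero n] (hr0 : 0 < r) (hrn : r < n)
    (x : Fin n → Fin n → ℝ) (hx0 : ∀ i, x i ≠ 0)
    (horth : ∀ i j, i ≠ j → x i ⬝ᵥ x j = 0)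
    (H : ℝ) (hH : H = (n : ℝ) / ∑ i, 1 / (x i ⬝ᵥ x i))
    (hmin : ∀ i, ((r : ℝ) / n) * H < x i ⬝ᵥ x i)
    (hlt1 : ∀ i, ((r : ℝ) / n) * H / (x i ⬝ᵥ x i) < 1)
    (P : Matrix (Fin n) (Fin n) ℝ)
    (hP : P = Matrix.diagonal fun i => ((r : ℝ) / n) * H / (x i ⬝ᵥ x i)) :
    P.rank = n ∧ ¬ (Pᵀ = P ∧ P * P = P ∧ P.rank ≤ r) := by
  have hxx : ∀ i, 0 < x i ⬝ᵥ x i := by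
    intro i
    have h := hx0 i
    have : x i ⬝ᵥ x i = ∑ j, (x i j)^2 := by
      simp [dotProduct, sq]
    rw [this]
    apply Finset.sum_pos'
    · intro j _; positivity
    · obtain ⟨j, hj⟩ := Function.ne_iff.mp h
      exact ⟨j, Finset.mem_univ j, by have : x i j ≠ 0 := hj; positivity⟩
  have hHpos : 0 < H := by
    rw [hH]
    apply div_pos
    · exact_mod_cast Nat.pos_of_ne_zero (NeZero.ne n)
    · apply Finset.sum_pos
      · intro i _; exact div_pos one_pos (hxx i)
      · exact Finset.univ_nonempty
  have hd : ∀ i, ((r : ℝ) / n) * H / (x i ⬝ᵥ x i) ≠ 0 := by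
    intro i
    have hn : (0:ℝ) < n := by exact_mod_cast Nat.pos_of_ne_zero (NeZero.ne n)
    have hr : (0:ℝ) < r := by exact_mod_cast hr0
    have := hxx i
    positivity
  have hrank : P.rank = n := by
    rw [hP, Matrix.rank_diagonal]
    rw [Fintype.card_eq_nat_card, Nat.card_eq_fintype_card]
    have : ∀ i : Fin n, (fun i => ((r : ℝ) / n) * H / (x i ⬝ᵥ x i)) i ≠ 0 := hd
    calc Fintype.card {i : Fin n // ((fun i => ((r : ℝ) / n) * H / (x i ⬝ᵥ x i)) i ≠ 0)}
        = Fintype.card (Fin n) := Fintype.card_congr (Equiv.subtypeUnivEquiv this)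
      _ = n := Fintype.card_fin n
  refine ⟨hrank, ?_⟩
  rintro ⟨-, -, hle⟩
  rw [hrank] at hle
  omega
end
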